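/- arXiv:2405.03850 — 2 statements merged into one kernel-verified Lean document; each statement's English description precedes it below -/
import Mathlib

section
/- Let f : 𝔽₂ⁿ → 𝔽₂ᵐ be a fully balanced Boolean function and let r be the dimension of its image, i.e., r = dim W where W ≤ 𝔽₂ᵐ is the linear span of {f(x) + f(x') : x, x' ∈ 𝔽₂ⁿ}. Then dim C(f) = m − r, #C(f) = 2^{m−r}, #B(f) = (2^r − 1)·2^{m−r}, and hence the balancing index b(f) = #B(f)/#C(f) equals 2^r − 1. -/
/-- The dot product of two vectors in `𝔽₂ᵏ`. -/
def dotp {k : ℕ} (u v : Fin k → ZMod 2) : ZMod 2 := ∑ i, u i * v i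

/-- `f` is `y`-balanced: `y·f(x) = 0` for exactly half of the inputs `x`. -/
def IsBalancedFor {n m : ℕ} (f : (Fin n → ZMod 2) → Fin m → ZMod 2)
    (y : Fin m → ZMod 2) : Prop :=
  (Finset.univ.filter fun x => dotp y (f x) = 0).card =
    (Finset.univ.filter fun x => dotp y (f x) = 1).card

/-- `f` is `y`-constant: the map `x ↦ y·f(x)` is constant. -/
def IsConstantFor {n m : ℕ} (f : (Fin n → ZMod 2) → Fin m → ZMod 2)
    (y : Fin m → ZMod 2) : Prop :=
  ∀ x x' : Fin n → ZMod 2, dotp y (f x) = dotp y (f x')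

/-- `f` is fully balanced: every `y` either balances `f` or makes it constant. -/
def FullyBalanced {n m : ℕ} (f : (Fin n → ZMod 2) → Fin m → ZMod 2) : Prop :=
  ∀ y : Fin m → ZMod 2, IsBalancedFor f y ∨ IsConstantFor f y

lemma dotp_add {k : ℕ} (y a b : Fin k → ZMod 2) :
    dotp y (a + b) = dotp y a + dotp y b := by
  simp [dotp, mul_add, Finset.sum_add_distrib]

lemma dotp_smul {k : ℕ} (c : ZMod 2) (y v : Fin k → ZMod 2) :
    dotp y (c • v) = c * dotp y v := by
  simp [dotp, Finset.mul_sum]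
  exact Finset.sum_congr rfl fun i _ => by ring

lemma dotp_single {k : ℕ} (y : Fin k → ZMod 2) (i : Fin k) :
    dotp y (Pi.single i 1) = y i := by
  simp [dotp, Pi.single_apply, mul_ite, Finset.sum_ite_eq']

noncomputable def dotL (k : ℕ) :
    (Fin k → ZMod 2) →ₗ[ZMod 2] Module.Dual (ZMod 2) (Fin k → ZMod 2) where
  toFun y := { toFun := fun v => dotp y v,
               map_add' := fun a b => dotp_add y a b,
               map_smul' := fun c v => dotp_smul c y v }
  map_add' a b := by ext v; simp [dotp, add_mul, Finset.sum_add_distrib]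
  map_smul' c a := by
    ext v; simp [dotp, Finset.mul_sum]
    exact Finset.sum_congr rfl fun i _ => by ring

lemma dotL_injective (k : ℕ) : Function.Injective (dotL k) := by
  rw [← LinearMap.ker_eq_bot, LinearMap.ker_eq_bot']
  intro y hy
  funext i
  have := congrArg (fun g => g (Pi.single i 1)) hy
  simpa [dotL, dotp_single] using this

noncomputable def dotE (k : ℕ) :
    (Fin k → ZMod 2) ≃ₗ[ZMod 2] Module.Dual (ZMod 2) (Fin k → ZMod 2) :=
  (dotL k).linearEquivOfInjective (dotL_injective k)
    (Subspace.dual_finrank_eq (V := Fin k → ZMod 2)).symm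

lemma dotE_coe (k : ℕ) :
    (dotE k : (Fin k → ZMod 2) →ₗ[ZMod 2] Module.Dual (ZMod 2) (Fin k → ZMod 2)) =
      dotL k := rfl

lemma zmod2_add_eq_zero_iff (a b : ZMod 2) : a + b = 0 ↔ a = b := by revert a b; decide

lemma zmod2_ne_zero (a : ZMod 2) (h : a ≠ 0) : a = 1 := by
  revert a; decide

lemma constant_not_balanced {n m : ℕ} (f : (Fin n → ZMod 2) → Fin m → ZMod 2)
    (y : Fin m → ZMod 2) (hc : IsConstantFor f y) : ¬ IsBalancedFor f y := by
  classical
  intro hb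
  unfold IsBalancedFor at hb
  have hcard : 0 < Fintype.card (Fin n → ZMod 2) := Fintype.card_pos
  by_cases h0 : dotp y (f 0) = 0
  · have h1 : (Finset.univ.filter fun x => dotp y (f x) = 0) = Finset.univ := by
      apply Finset.filter_true_of_mem
      intro x _
      rw [hc x 0]; exact h0
    have h2 : (Finset.univ.filter fun x => dotp y (f x) = 1) = ∅ := by
      apply Finset.filter_false_of_mem
      intro x _
      rw [hc x 0, h0]; decide
    rw [h1, h2] at hb
    simp only [Finset.card_univ, Finset.card_empty] at hb
    omega
  · have h0' : dotp y (f 0) = 1 := zmod2_ne_zero _ h0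
    have h1 : (Finset.univ.filter fun x => dotp y (f x) = 1) = Finset.univ := by
      apply Finset.filter_true_of_mem
      intro x _
      rw [hc x 0]; exact h0'
    have h2 : (Finset.univ.filter fun x => dotp y (f x) = 0) = ∅ := by
      apply Finset.filter_false_of_mem
      intro x _
      rw [hc x 0, h0']; decide
    rw [h1, h2] at hb
    simp only [Finset.card_univ, Finset.card_empty] at hb
    omega

/-- Parameters of fully balanced functions: if `f` is fully balanced and `r` is the
dimension of its image (i.e. of the span `W` of the differences of values of `f`),
then `dim C(f) = m − r`, `#C(f) = 2^{m−r}`, `#B(f) = (2^r − 1)·2^{m−r}` and the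
balancing index is `b(f) = #B(f)/#C(f) = 2^r − 1`. -/
theorem parameters_of_fullyBalanced (n m : ℕ)
    (f : (Fin n → ZMod 2) → Fin m → ZMod 2) (hf : FullyBalanced f)
    (W : Submodule (ZMod 2) (Fin m → ZMod 2))
    (hW : W = Submodule.span (ZMod 2)
      {d : Fin m → ZMod 2 | ∃ x x' : Fin n → ZMod 2, d = f x + f x'})
    (r : ℕ) (hr : r = Module.finrank (ZMod 2) W) :
    (∃ C : Submodule (ZMod 2) (Fin m → ZMod 2),
      (C : Set (Fin m → ZMod 2)) = {y : Fin m → ZMod 2 | IsConstantFor f y} ∧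
      Module.finrank (ZMod 2) C = m - r) ∧
    Nat.card {y : Fin m → ZMod 2 | IsConstantFor f y} = 2 ^ (m - r) ∧
    Nat.card {y : Fin m → ZMod 2 | IsBalancedFor f y} = (2 ^ r - 1) * 2 ^ (m - r) ∧
    Nat.card {y : Fin m → ZMod 2 | IsBalancedFor f y} /
      Nat.card {y : Fin m → ZMod 2 | IsConstantFor f y} = 2 ^ r - 1 := by
  classical
  have hm : Module.finrank (ZMod 2) (Fin m → ZMod 2) = m := by simp
  have hrm : r ≤ m := by
    have := W.finrank_le
    rw [hm] at this
    omega
  set C : Submodule (ZMod 2) (Fin m → ZMod 2) := W.dualAnnihilator.comap (dotL m) with hC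
  -- membership characterization
  have hCmem : ∀ y, y ∈ C ↔ IsConstantFor f y := by
    intro y
    rw [hC, Submodule.mem_comap, Submodule.mem_dualAnnihilator]
    subst hW
    constructor
    · intro h x x'
      have := h (f x + f x') (Submodule.subset_span ⟨x, x', rfl⟩)
      simp only [dotL, LinearMap.coe_mk, AddHom.coe_mk] at this
      rw [dotp_add, zmod2_add_eq_zero_iff] at this
      exact this
    · intro h w hw
      have hsub : {d : Fin m → ZMod 2 | ∃ x x' : Fin n → ZMod 2, d = f x + f x'} ⊆
          ↑(LinearMap.ker (dotL m y)) := by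
        rintro d ⟨x, x', rfl⟩
        simp only [SetLike.mem_coe, LinearMap.mem_ker]
        show dotp y (f x + f x') = 0
        rw [dotp_add, zmod2_add_eq_zero_iff]
        exact h x x'
      exact Submodule.span_le.mpr hsub hw
  have hCset : (C : Set (Fin m → ZMod 2)) = {y : Fin m → ZMod 2 | IsConstantFor f y} :=
    Set.ext fun y => hCmem y
  -- finrank of C
  have hann : Module.finrank (ZMod 2) W.dualAnnihilator = m - r := by
    have h1 := Submodule.finrank_quotient_add_finrank W
    have equiv : ((Fin m → ZMod 2) ⧸ W) ≃ₗ[ZMod 2] W.dualAnnihilator :=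
      Subspace.quotEquivAnnihilator W
    have h2 := LinearEquiv.finrank_eq (R := ZMod 2) equiv
    rw [hm] at h1
    omega
  have hfinC : Module.finrank (ZMod 2) C = m - r := by
    have hCe : C = Submodule.comap
        (dotE m : (Fin m → ZMod 2) →ₗ[ZMod 2] Module.Dual (ZMod 2) (Fin m → ZMod 2))
        W.dualAnnihilator := by rw [hC, dotE_coe]
    rw [hCe, ← hann]
    exact LinearEquiv.finrank_eq (R := ZMod 2)
      (LinearEquiv.ofSubmodule' (dotE m) W.dualAnnihilator)
  -- cardinality of C
  have hcardC : Nat.card {y : Fin m → ZMod 2 | IsConstantFor f y} = 2 ^ (m - r) := by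
    rw [← hCset]
    have : Nat.card (C : Set (Fin m → ZMod 2)) = Nat.card C := rfl
    rw [this, Nat.card_eq_fintype_card,
      Module.card_eq_pow_finrank (K := ZMod 2) (V := C), ZMod.card, hfinC]
  -- the balanced set is the complement of the constant set
  have hBset : {y : Fin m → ZMod 2 | IsBalancedFor f y} =
      {y : Fin m → ZMod 2 | IsConstantFor f y}ᶜ := by
    ext y
    simp only [Set.mem_setOf_eq, Set.mem_compl_iff]
    constructor
    · intro hb hc
      exact constant_not_balanced f y hc hb
    · intro hnc
      rcases hf y with hb | hc
      · exact hb
      · exact absurd hc hnc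
  have hcardTot : Nat.card (Fin m → ZMod 2) = 2 ^ m := by
    simp [Nat.card_eq_fintype_card]
  have hcardB : Nat.card {y : Fin m → ZMod 2 | IsBalancedFor f y} =
      (2 ^ r - 1) * 2 ^ (m - r) := by
    rw [hBset, Nat.card_eq_fintype_card, Fintype.card_compl_set,
      ← Nat.card_eq_fintype_card, ← Nat.card_eq_fintype_card, hcardC, hcardTot]
    rw [Nat.sub_mul, one_mul, ← pow_add]
    congr 2
    omega
  refine ⟨⟨C, hCset, hfinC⟩, hcardC, hcardB, ?_⟩
  rw [hcardB, hcardC, Nat.mul_div_cancel _ (Nat.pow_pos (by norm_num))]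
end

section
/- Let f : 𝔽₂ⁿ → 𝔽₂ᵐ be a generalised Simon function hiding the linear subspace S ≤ 𝔽₂ⁿ, with K = #S. Then for every z ∈ 𝔽₂ⁿ, the probability of obtaining z when the GPK algorithm is run with a marker y chosen uniformly at random from 𝔽₂ᵐ, namely p(z) = (1/2ᵐ)·Σ_{y ∈ 𝔽₂ᵐ} ((1/2ⁿ)·Σ_{x ∈ 𝔽₂ⁿ} (−1)^{y·f(x) + x·z})², equals K/2ⁿ if z·x = 0 for all x ∈ S, and equals 0 otherwise. -/
open scoped Classical

lemma chi_add (a b : ZMod 2) : (-1:ℝ)^(a+b).val = (-1:ℝ)^a.val * (-1:ℝ)^b.val := by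
  have h : ∀ c : ZMod 2, c = 0 ∨ c = 1 := by decide
  rcases h a with ha | ha <;> rcases h b with hb | hb <;> subst ha <;> subst hb <;>
    norm_num [show ZMod.val (2:ZMod 2) = 0 by decide, ZMod.val_one]

lemma dotp_comm {k : ℕ} (u v : Fin k → ZMod 2) : dotp u v = dotp v u := by
  simp [dotp, mul_comm]

lemma dotp_add_left {k : ℕ} (u v w : Fin k → ZMod 2) :
    dotp (u + v) w = dotp u w + dotp v w := by
  simp [dotp, add_mul, Finset.sum_add_distrib]

lemma dotp_add_right {k : ℕ} (u v w : Fin k → ZMod 2) :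
    dotp u (v + w) = dotp u v + dotp u w := by
  simp [dotp, mul_add, Finset.sum_add_distrib]

lemma sum_char_eq_zero {G : Type*} [AddCommGroup G] [Fintype G] (χ : G → ℝ)
    (hmul : ∀ a b, χ (a + b) = χ a * χ b) {t : G} (ht : χ t = -1) :
    ∑ g, χ g = 0 := by
  have h1 : ∑ g, χ (g + t) = ∑ g, χ g :=
    Fintype.sum_equiv (Equiv.addRight t) _ _ (fun g => rfl)
  have h2 : ∑ g, χ (g + t) = (∑ g, χ g) * (-1) := by
    rw [Finset.sum_mul]
    exact Finset.sum_congr rfl fun g _ => by rw [hmul, ht]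
  have := h1.symm.trans h2
  linarith

lemma sum_y (k : ℕ) (w : Fin k → ZMod 2) :
    ∑ y : Fin k → ZMod 2, (-1:ℝ)^(dotp y w).val = if w = 0 then (2:ℝ)^k else 0 := by
  split_ifs with hw
  · subst hw
    simp [dotp, Finset.card_univ]
  · obtain ⟨i, hi⟩ := Function.ne_iff.mp hw
    have hwi : w i = 1 := by
      have h : ∀ c : ZMod 2, c ≠ 0 → c = 1 := by decide
      simpa using h _ (by simpa using hi)
    apply sum_char_eq_zero (fun y => (-1:ℝ)^(dotp y w).val)
      (fun a b => by simp only [dotp_add_left, chi_add]) (t := Pi.single i 1)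
    have : dotp (Pi.single i 1) w = w i := by
      simp [dotp, Pi.single_apply, Finset.sum_ite_eq']
    simp [this, hwi, ZMod.val_one]

lemma pi_add_eq_zero {k : ℕ} (a b : Fin k → ZMod 2) : a + b = 0 ↔ a = b := by
  have h : ∀ a b : ZMod 2, a + b = 0 ↔ a = b := by decide
  constructor
  · intro hab; funext i; exact (h _ _).mp (congrFun hab i)
  · intro hab; subst hab; funext i; exact (h _ _).mpr rfl

/-- For a generalised Simon function `f` hiding the subspace `S` with `K = #S`, the
probability of obtaining `z` when the GPK algorithm is run with a uniformly random
marker `y ∈ 𝔽₂ᵐ` is `K/2ⁿ` if `z` is orthogonal to `S`, and `0` otherwise. -/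
theorem gpk_simon_random_marker_probability (n m : ℕ)
    (f : (Fin n → ZMod 2) → Fin m → ZMod 2)
    (S : Submodule (ZMod 2) (Fin n → ZMod 2))
    (hS : ∀ x x' : Fin n → ZMod 2, f x = f x' ↔ x + x' ∈ S)
    (K : ℕ) (hK : K = Nat.card S) (z : Fin n → ZMod 2) :
    (1 / 2 ^ m : ℝ) * ∑ y : Fin m → ZMod 2,
        ((1 / 2 ^ n : ℝ) *
          ∑ x : Fin n → ZMod 2, (-1 : ℝ) ^ (dotp y (f x) + dotp x z).val) ^ 2 =
      if ∀ x ∈ S, dotp z x = 0 then (K : ℝ) / 2 ^ n else 0 := by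
  set g : (Fin m → ZMod 2) → (Fin n → ZMod 2) → ℝ :=
    fun y x => (-1:ℝ) ^ (dotp y (f x) + dotp x z).val with hg
  set χ : (Fin n → ZMod 2) → ℝ := fun u => (-1:ℝ) ^ (dotp u z).val with hχ
  set T : ℝ := ∑ u : Fin n → ZMod 2, if u ∈ S then χ u else 0 with hT
  -- inner y-sum for fixed x, x'
  have key : ∀ x x' : Fin n → ZMod 2,
      ∑ y : Fin m → ZMod 2, g y x * g y x'
        = (if x + x' ∈ S then (2:ℝ)^m else 0) * χ (x + x') := by
    intro x x'
    have h1 : ∀ y : Fin m → ZMod 2, g y x * g y x'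
        = (-1:ℝ) ^ (dotp y (f x + f x')).val * χ (x + x') := by
      intro y
      simp only [hg, hχ, dotp_add_right, dotp_add_left, chi_add]
      ring
    rw [Finset.sum_congr rfl fun y _ => h1 y, ← Finset.sum_mul, sum_y]
    congr 1
    exact if_congr ((pi_add_eq_zero _ _).trans (hS x x')) rfl rfl
  -- the double sum over x, x'
  have hdouble : ∀ x : Fin n → ZMod 2,
      ∑ x' : Fin n → ZMod 2,
        (if x + x' ∈ S then (2:ℝ)^m else 0) * χ (x + x') = (2:ℝ)^m * T := by
    intro x
    have := Fintype.sum_equiv (Equiv.addLeft x)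
      (fun x' => (if x + x' ∈ S then (2:ℝ)^m else 0) * χ (x + x'))
      (fun u => (if u ∈ S then (2:ℝ)^m else 0) * χ u) (fun x' => rfl)
    rw [this, hT, Finset.mul_sum]
    exact Finset.sum_congr rfl fun u _ => by by_cases hu : u ∈ S <;> simp [hu]
  have hcardn : (Fintype.card (Fin n → ZMod 2) : ℝ) = 2 ^ n := by
    simp [Fintype.card_fun]
  have hmain : (1 / 2 ^ m : ℝ) * ∑ y : Fin m → ZMod 2,
        ((1 / 2 ^ n : ℝ) * ∑ x : Fin n → ZMod 2, g y x) ^ 2 = T / 2 ^ n := by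
    have expand : ∑ y : Fin m → ZMod 2,
        ((1 / 2 ^ n : ℝ) * ∑ x : Fin n → ZMod 2, g y x) ^ 2
        = (1 / 2 ^ n : ℝ)^2 * ∑ y : Fin m → ZMod 2,
            ∑ x : Fin n → ZMod 2, ∑ x' : Fin n → ZMod 2, g y x * g y x' := by
      rw [Finset.mul_sum]
      refine Finset.sum_congr rfl fun y _ => ?_
      rw [mul_pow, sq (∑ x : Fin n → ZMod 2, g y x), Finset.sum_mul_sum]
    rw [expand, Finset.sum_comm]
    have : ∀ x : Fin n → ZMod 2,
        ∑ y : Fin m → ZMod 2, ∑ x' : Fin n → ZMod 2, g y x * g y x'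
          = (2:ℝ)^m * T := by
      intro x
      rw [Finset.sum_comm]
      calc ∑ x' : Fin n → ZMod 2, ∑ y : Fin m → ZMod 2, g y x * g y x'
          = ∑ x' : Fin n → ZMod 2,
              (if x + x' ∈ S then (2:ℝ)^m else 0) * χ (x + x') :=
            Finset.sum_congr rfl fun x' _ => key x x'
        _ = (2:ℝ)^m * T := hdouble x
    rw [Finset.sum_congr rfl fun x _ => this x, Finset.sum_const, Finset.card_univ,
      nsmul_eq_mul, hcardn]
    have h2m : (2:ℝ)^m ≠ 0 := by positivity
    have h2n : (2:ℝ)^n ≠ 0 := by positivity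
    field_simp
  rw [hmain]
  -- now compute T
  by_cases hz : ∀ x ∈ S, dotp z x = 0
  · rw [if_pos hz]
    have : T = ∑ u : Fin n → ZMod 2, if u ∈ S then (1:ℝ) else 0 := by
      refine Finset.sum_congr rfl fun u _ => ?_
      split_ifs with hu
      · simp [hχ, dotp_comm u z, hz u hu]
      · rfl
    rw [this, Finset.sum_boole]
    congr 1
    rw [hK, Nat.card_eq_fintype_card, Fintype.card_subtype]
  · rw [if_neg hz]
    push_neg at hz
    obtain ⟨x, hxS, hxz⟩ := hz
    have hxz1 : dotp x z = 1 := by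
      rw [dotp_comm]
      have h : ∀ c : ZMod 2, c ≠ 0 → c = 1 := by decide
      exact h _ hxz
    have hTsub : T = ∑ s : {u : Fin n → ZMod 2 // u ∈ S}, χ s.1 := by
      rw [hT, ← Finset.sum_filter]
      exact Finset.sum_subtype _ (fun u => by simp) _
    have hzero : ∑ s : {u : Fin n → ZMod 2 // u ∈ S}, χ s.1 = 0 := by
      apply sum_char_eq_zero (G := S) (fun s => χ s.1)
        (fun a b => by simp only [hχ, Submodule.coe_add, dotp_add_left, chi_add])
        (t := ⟨x, hxS⟩)
      simp [hχ, hxz1, ZMod.val_one]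
    rw [hTsub, hzero, zero_div]
end
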